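/- For any word w over {a,b} and any natural number k ≥ 1 (with w nonempty), m(w·a·(ab)^k·a·b) > m(w·a·b·(ab)^k·b). More precisely, for any nonempty word w and any k ∈ ℕ, the difference m(w · a(ab)^k ab) − m(w · ab(ab)^k b) equals P(2k+1) times a positive quantity, hence is strictly positive. -/

import Mathlib

def A : Matrix (Fin 2) (Fin 2) ℤ := !![1,1;1,2]
def B : Matrix (Fin 2) (Fin 2) ℤ := !![2,1;1,1]
/-- matrix of a word: `false` is the letter `a`, `true` is the letter `b` -/
def Mw (w : List Bool) : Matrix (Fin 2) (Fin 2) ℤ :=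
  (w.map (fun x => if x then B else A)).prod
/-- the m-value: the top-right entry -/
def mval (w : List Bool) : ℤ := Mw w 0 1
def U : Matrix (Fin 2) (Fin 2) ℤ := !![0,-1;1,0]
def J : Matrix (Fin 2) (Fin 2) ℤ := !![0,1;1,0]
/-- reversal with letters exchanged -/
def Ebar (w : List Bool) : List Bool := (w.map (fun x => !x)).reverse
def pell : ℕ → ℕ
  | 0 => 0
  | 1 => 1
  | n+2 => 2 * pell (n+1) + pell n

/-!
Since `(AB)^k = [[P(2k+1) - P(2k), P(2k)], [2 P(2k), P(2k+1) - P(2k)]]`, a direct computation gives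
`A (AB)^k (AB) - (AB) (AB)^k B = diag(-P(2k+1), P(2k+1))`. Multiplying on the left by `M(w)` and
reading off the top-right entry, the difference of the two m-values is `m(w) P(2k+1)`, and both
factors are positive: every entry of `M(w)` is at least `1` once `w` is nonempty.
-/

lemma pell_add_two (n : ℕ) : pell (n + 2) = 2 * pell (n + 1) + pell n := rfl

lemma pell_succ_pos (n : ℕ) : 0 < pell (n + 1) := by
  induction n with
  | zero => decide
  | succ n ih => rw [pell_add_two]; omega

lemma Mw_cons (c : Bool) (w : List Bool) : Mw (c :: w) = (if c then B else A) * Mw w := by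
  simp [Mw]

lemma Mw_append (u v : List Bool) : Mw (u ++ v) = Mw u * Mw v := by
  simp [Mw]

lemma Mw_flatten_replicate_ab (k : ℕ) :
    Mw (List.replicate k [false, true]).flatten = (A * B) ^ k := by
  simp [Mw, List.map_flatten, List.prod_flatten, List.map_replicate, List.prod_replicate]

lemma AB_pow (k : ℕ) : (A * B) ^ k =
    !![(pell (2 * k + 1) : ℤ) - pell (2 * k), pell (2 * k);
       2 * pell (2 * k), (pell (2 * k + 1) : ℤ) - pell (2 * k)] := by
  induction k with
  | zero => simp [Matrix.one_fin_two, pell]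
  | succ k ih =>
    rw [pow_succ, ih, show 2 * (k + 1) = 2 * k + 2 by ring, pell_add_two, pell_add_two]
    simp only [A, B, Matrix.mul_fin_two]
    push_cast
    congr 1
    ring_nf

lemma A_mul_AB_pow_mul_AB_sub (k : ℕ) :
    A * (A * B) ^ k * (A * B) - A * B * (A * B) ^ k * B =
      !![-(pell (2 * k + 1) : ℤ), 0; 0, pell (2 * k + 1)] := by
  rw [AB_pow]
  ext i j
  fin_cases i <;> fin_cases j <;> simp [A, B] <;> ring

lemma one_le_mul_apply_of_one_le {X Y : Matrix (Fin 2) (Fin 2) ℤ}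
    (hX : ∀ i j, 1 ≤ X i j) (hY : ∀ i j, 1 ≤ Y i j) (i j : Fin 2) : 1 ≤ (X * Y) i j := by
  have := hX i 0; have := hX i 1; have := hY 0 j; have := hY 1 j
  simp only [Matrix.mul_apply, Fin.sum_univ_two]
  nlinarith

lemma one_le_Mw_apply (w : List Bool) (hw : w ≠ []) (i j : Fin 2) : 1 ≤ Mw w i j := by
  induction w generalizing i j with
  | nil => exact absurd rfl hw
  | cons c t ih =>
    have hc : ∀ i j, 1 ≤ (if c then B else A) i j := by
      cases c <;> intro i j <;> fin_cases i <;> fin_cases j <;> decide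
    rcases eq_or_ne t [] with rfl | ht
    · simpa [Mw] using hc i j
    · rw [Mw_cons]
      exact one_le_mul_apply_of_one_le hc (ih ht) i j

theorem mval_sub_eq (w : List Bool) (k : ℕ) :
    mval (w ++ [false] ++ (List.replicate k [false, true]).flatten ++ [false, true]) -
      mval (w ++ [false, true] ++ (List.replicate k [false, true]).flatten ++ [true]) =
      mval w * pell (2 * k + 1) := by
  have hA : Mw [false] = A := by simp [Mw]
  have hB : Mw [true] = B := by simp [Mw]
  have hAB : Mw [false, true] = A * B := by simp [Mw]
  have key := congrArg (fun D => (Mw w * D) 0 1) (A_mul_AB_pow_mul_AB_sub k)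
  simp only [Matrix.mul_sub, Matrix.sub_apply, ← Matrix.mul_assoc] at key
  simp only [mval, Mw_append, Mw_flatten_replicate_ab, hA, hB, hAB, ← Matrix.mul_assoc]
  rw [key]
  simp [Matrix.mul_apply]

theorem stmt17 (w : List Bool) (hw : w ≠ []) (k : ℕ) :
    mval (w ++ [false] ++ (List.replicate k [false, true]).flatten ++ [false, true]) >
    mval (w ++ [false, true] ++ (List.replicate k [false, true]).flatten ++ [true]) := by
  have hm : 0 < mval w := one_le_Mw_apply w hw 0 1
  have hP : (0 : ℤ) < pell (2 * k + 1) := by exact_mod_cast pell_succ_pos (2 * k)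
  rw [gt_iff_lt, ← sub_pos, mval_sub_eq]
  exact mul_pos hm hP
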